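/- arXiv:2407.02011 — 7 statements merged into one kernel-verified Lean document; each statement's English description precedes it below -/
import Mathlib

section
/- Let X be a pseudometric space, λ ∈ (0,1) and C₀ ≥ 0. Let A : X ≃ X and f : X ≃ X be bijections such that dist(A⁻¹(x), A⁻¹(y)) ≤ λ·dist(x, y) for all x, y ∈ X, and dist(f⁻¹(x), A⁻¹(x)) ≤ C₀ for all x ∈ X. Then for every real C ≥ C₀/(1−λ) and every subset L ⊆ X, the image under f⁻¹ of the closed C-thickening of A '' L is contained in the closed C-thickening of L, i.e. f⁻¹ '' (cthickening C (A '' L)) ⊆ cthickening C L. -/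
open Metric Set

/-- Lemma 3 (Lem:bigenoughnbhd): for `C ≥ C₀ / (1 - l)`,
`f⁻¹ (cthickening C (A '' L)) ⊆ cthickening C L`. -/
theorem stmt_2 {X : Type*} [PseudoMetricSpace X] (l C₀ : ℝ)
    (hl0 : 0 < l) (hl1 : l < 1) (hC₀ : 0 ≤ C₀)
    (A f : X ≃ X)
    (hA : ∀ x y : X, dist (A.symm x) (A.symm y) ≤ l * dist x y)
    (hfA : ∀ x : X, dist (f.symm x) (A.symm x) ≤ C₀) :
    ∀ C : ℝ, C₀ / (1 - l) ≤ C → ∀ L : Set X,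
      ⇑f.symm '' (cthickening C (⇑A '' L)) ⊆ cthickening C L := by
  intro C hC L
  have h1l : 0 < 1 - l := by linarith
  have hC0 : 0 ≤ C := le_trans (div_nonneg hC₀ h1l.le) hC
  have hkey : C₀ + l * C ≤ C := by
    have := (div_le_iff₀ h1l).mp hC
    nlinarith
  rintro _ ⟨x, hx, rfl⟩
  rcases L.eq_empty_or_nonempty with rfl | hL
  · simp at hx
  have hAL : (⇑A '' L).Nonempty := hL.image _
  have hxd : infDist x (⇑A '' L) ≤ C := by
    rw [mem_cthickening_iff] at hx
    rw [infDist, ← ENNReal.le_ofReal_iff_toReal_le (infEdist_ne_top hAL (x := x)) hC0]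
    exact hx
  rw [mem_cthickening_iff, ENNReal.le_ofReal_iff_toReal_le (infEdist_ne_top hL) hC0]
  change infDist (f.symm x) L ≤ C
  have hε : ∀ ε : ℝ, 0 < ε → infDist (f.symm x) L ≤ C₀ + l * C + l * ε := by
    intro ε hε
    obtain ⟨y, hy, hxy⟩ := (infDist_lt_iff hAL).mp
      (lt_of_le_of_lt hxd (by linarith : C < C + ε))
    obtain ⟨z, hz, rfl⟩ := hy
    have : dist (f.symm x) z ≤ C₀ + l * dist x (A z) := by
      have h1 := hfA x
      have h2 : dist (A.symm x) z ≤ l * dist x (A z) := by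
        simpa using hA x (A z)
      calc dist (f.symm x) z ≤ dist (f.symm x) (A.symm x) + dist (A.symm x) z :=
            dist_triangle _ _ _
        _ ≤ C₀ + l * dist x (A z) := add_le_add h1 h2
    calc infDist (f.symm x) L ≤ dist (f.symm x) z := infDist_le_dist_of_mem hz
      _ ≤ C₀ + l * dist x (A z) := this
      _ ≤ C₀ + l * (C + ε) := by nlinarith [hxy.le]
      _ = C₀ + l * C + l * ε := by ring
  have : infDist (f.symm x) L ≤ C₀ + l * C := by
    by_contra h
    push_neg at h
    have h2 := hε ((infDist (f.symm x) L - (C₀ + l * C)) / l / 2)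
      (by have := sub_pos.mpr h; positivity)
    rw [div_div] at h2
    have h3 : l * ((infDist (f.symm x) L - (C₀ + l * C)) / (l * 2)) =
        (infDist (f.symm x) L - (C₀ + l * C)) / 2 := by
      field_simp
    rw [h3] at h2
    linarith
  linarith
end

section
/- Let X be a pseudometric space, λ ∈ (0,1) and C₀ ≥ 0. Let A : X ≃ X and f : X ≃ X be bijections such that dist(A⁻¹(x), A⁻¹(y)) ≤ λ·dist(x, y) for all x, y ∈ X, and dist(f⁻¹(x), A⁻¹(x)) ≤ C₀ for all x ∈ X. Fix a real C ≥ C₀/(1−λ) and a subset L ⊆ X. Then the sequence of sets n ↦ (f⁻¹)^[n] '' (cthickening C ((A^[n]) '' L)) is antitone: for every n, (f⁻¹)^[n+1] '' (cthickening C ((A^[n+1]) '' L)) ⊆ (f⁻¹)^[n] '' (cthickening C ((A^[n]) '' L)). -/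
/-!
`f⁻¹` stays within `C₀` of `A⁻¹`, which contracts by `λ`, so `f⁻¹` maps the closed
`C`-neighbourhood of `A(S)` into the closed `(C₀ + λC)`-neighbourhood of `S`; the choice
`C ≥ C₀ / (1 - λ)` means exactly `C₀ + λC ≤ C`. Taking `S = Aⁿ(L)` and applying `f⁻ⁿ` gives
the inclusion.
-/

open Metric Set

namespace Metric

variable {X Y : Type*} [PseudoMetricSpace X] [PseudoMetricSpace Y]

theorem mem_cthickening_iff_infDist_le {δ : ℝ} {s : Set X} {x : X} (hδ : 0 ≤ δ)
    (hs : s.Nonempty) : x ∈ cthickening δ s ↔ infDist x s ≤ δ := by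
  rw [mem_cthickening_iff, ENNReal.le_ofReal_iff_toReal_le (infEDist_ne_top hs) hδ]
  rfl

theorem infDist_image_le_mul {g : X → Y} {l : ℝ} (hl : 0 < l)
    (hg : ∀ x y, dist (g x) (g y) ≤ l * dist x y) {T : Set X} (hT : T.Nonempty) (x : X) :
    infDist (g x) (g '' T) ≤ l * infDist x T := by
  rw [← div_le_iff₀' hl, le_infDist hT]
  intro y hy
  rw [div_le_iff₀' hl]
  exact (infDist_le_dist_of_mem (mem_image_of_mem g hy)).trans (hg x y)

theorem image_cthickening_subset_cthickening_image {g h : X → Y} {l C₀ C : ℝ}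
    (hl0 : 0 < l) (hl1 : l < 1) (hh : ∀ x y, dist (h x) (h y) ≤ l * dist x y)
    (hgh : ∀ x, dist (g x) (h x) ≤ C₀) (hC : C₀ + l * C ≤ C) (T : Set X) :
    g '' cthickening C T ⊆ cthickening C (h '' T) := by
  rcases T.eq_empty_or_nonempty with rfl | hT
  · simp
  rintro _ ⟨x, hx, rfl⟩
  have hC₀ : 0 ≤ C₀ := dist_nonneg.trans (hgh x)
  have hC0 : 0 ≤ C := by nlinarith
  rw [mem_cthickening_iff_infDist_le hC0 hT] at hx
  rw [mem_cthickening_iff_infDist_le hC0 (hT.image h)]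
  calc infDist (g x) (h '' T) ≤ infDist (h x) (h '' T) + dist (g x) (h x) :=
        infDist_le_infDist_add_dist
    _ ≤ l * infDist x T + C₀ := add_le_add (infDist_image_le_mul hl0 hh hT x) (hgh x)
    _ ≤ l * C + C₀ := by gcongr
    _ ≤ C := by linarith

end Metric

theorem stmt_3_general {X : Type*} [PseudoMetricSpace X] (l C₀ : ℝ)
    (hl0 : 0 < l) (hl1 : l < 1)
    (A f : X ≃ X)
    (hA : ∀ x y : X, dist (A.symm x) (A.symm y) ≤ l * dist x y)
    (hfA : ∀ x : X, dist (f.symm x) (A.symm x) ≤ C₀)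
    (C : ℝ) (hC : C₀ / (1 - l) ≤ C) (L : Set X) :
    ∀ n : ℕ,
      (⇑f.symm)^[n + 1] '' (cthickening C ((⇑A)^[n + 1] '' L)) ⊆
        (⇑f.symm)^[n] '' (cthickening C ((⇑A)^[n] '' L)) := by
  intro n
  have hC' : C₀ + l * C ≤ C := by
    have := (div_le_iff₀ (sub_pos.mpr hl1)).mp hC
    linarith
  have hstep :=
    image_cthickening_subset_cthickening_image hl0 hl1 hA hfA hC' (A '' (A^[n] '' L))
  rw [A.symm_image_image] at hstep
  rw [Function.iterate_succ, Function.iterate_succ', image_comp, image_comp]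
  exact image_mono hstep

/-- The sequence `n ↦ (f⁻¹)^[n] '' (cthickening C ((A^[n]) '' L))` is antitone. -/
theorem stmt_3 {X : Type*} [PseudoMetricSpace X] (l C₀ : ℝ)
    (hl0 : 0 < l) (hl1 : l < 1) (hC₀ : 0 ≤ C₀)
    (A f : X ≃ X)
    (hA : ∀ x y : X, dist (A.symm x) (A.symm y) ≤ l * dist x y)
    (hfA : ∀ x : X, dist (f.symm x) (A.symm x) ≤ C₀)
    (C : ℝ) (hC : C₀ / (1 - l) ≤ C) (L : Set X) :
    ∀ n : ℕ,
      (⇑f.symm)^[n + 1] '' (cthickening C ((⇑A)^[n + 1] '' L)) ⊆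
        (⇑f.symm)^[n] '' (cthickening C ((⇑A)^[n] '' L)) :=
  stmt_3_general l C₀ hl0 hl1 A f hA hfA C hC L
end

section
/- Let X be a pseudometric space, λ ∈ (0,1) and C₀ ≥ 0. Let A : X ≃ X and f : X ≃ X be bijections such that dist(A⁻¹(x), A⁻¹(y)) ≤ λ·dist(x, y) for all x, y ∈ X, and dist(f⁻¹(x), A⁻¹(x)) ≤ C₀ for all x ∈ X. Fix C ≥ C₀/(1−λ) and for a subset L ⊆ X define η(L) = ⋂_{n≥0} (f⁻¹)^[n] '' (cthickening C ((A^[n]) '' L)). Then for every subset L ⊆ X one has f⁻¹ '' η(L) = η(A⁻¹ '' L). -/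
open Metric Set

/-!
Since `A⁻¹` contracts by `l` and `f⁻¹` stays within `C₀` of `A⁻¹`, the map `f⁻¹` sends the closed
`C`-neighbourhood of any set `M` into the closed `(C₀ + l C)`-neighbourhood of `A⁻¹ '' M`, and
`C₀ + l C ≤ C` exactly when `C ≥ C₀ / (1 - l)`. This gives `f⁻¹ '' η(L) ⊆ η(A⁻¹ '' L)` term by
term; conversely, the `(n + 1)`-st term of `η(A⁻¹ '' L)` is the image under `f⁻¹` of the `n`-th
term of `η(L)`.
-/

section Neighbourhoods

variable {X Y : Type*} [PseudoMetricSpace X] [PseudoMetricSpace Y]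

lemma Metric.mem_cthickening_iff_infDist_le_s4 {s : Set X} {x : X} {δ : ℝ} (hδ : 0 ≤ δ)
    (hs : s.Nonempty) : x ∈ cthickening δ s ↔ infDist x s ≤ δ := by
  rw [mem_cthickening_iff, infDist, ENNReal.le_ofReal_iff_toReal_le (infEDist_ne_top hs) hδ]

variable {g h : X → Y} {l C₀ : ℝ}

lemma infDist_image_le_of_dist_le (hl : 0 < l) (hgh : ∀ x y, dist (g x) (h y) ≤ C₀ + l * dist x y)
    {M : Set X} (hM : M.Nonempty) (x : X) :
    infDist (g x) (h '' M) ≤ C₀ + l * infDist x M := by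
  suffices (infDist (g x) (h '' M) - C₀) / l ≤ infDist x M by
    rw [div_le_iff₀ hl] at this
    linarith
  refine (le_infDist hM).2 fun y hy => ?_
  rw [div_le_iff₀' hl, sub_le_iff_le_add']
  exact (infDist_le_dist_of_mem (mem_image_of_mem h hy)).trans (hgh x y)

lemma image_cthickening_subset_cthickening_image (hl : 0 < l)
    (hgh : ∀ x y, dist (g x) (h y) ≤ C₀ + l * dist x y) {C : ℝ} (hC : 0 ≤ C)
    (hCl : C₀ + l * C ≤ C) (M : Set X) : g '' cthickening C M ⊆ cthickening C (h '' M) := by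
  rcases M.eq_empty_or_nonempty with rfl | hM
  · simp
  rintro _ ⟨x, hx, rfl⟩
  rw [mem_cthickening_iff_infDist_le_s4 hC hM] at hx
  rw [mem_cthickening_iff_infDist_le_s4 hC (hM.image h)]
  calc infDist (g x) (h '' M) ≤ C₀ + l * infDist x M := infDist_image_le_of_dist_le hl hgh hM x
    _ ≤ C₀ + l * C := by gcongr
    _ ≤ C := hCl

end Neighbourhoods

section Leaves

variable {X : Type*} [PseudoMetricSpace X]

lemma image_iInter_iterate_cthickening_eq {g : X → X} (hg : g.Injective) (A : X ≃ X) {C : ℝ}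
    (hgA : ∀ M : Set X, g '' cthickening C M ⊆ cthickening C (A.symm '' M)) (L : Set X) :
    g '' ⋂ n : ℕ, g^[n] '' cthickening C (A^[n] '' L) =
      ⋂ n : ℕ, g^[n] '' cthickening C (A^[n] '' (A.symm '' L)) := by
  have hg_iterate (n : ℕ) (s : Set X) : g '' (g^[n] '' s) = g^[n] '' (g '' s) :=
    ((Function.Commute.refl g).iterate_right n).set_image s
  have hA_iterate (n : ℕ) (s : Set X) : A^[n] '' (A.symm '' s) = A.symm '' (A^[n] '' s) :=
    (Function.Commute.iterate_left (f := A) (g := A.symm) (fun x => by simp) n).set_image s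
  have h_succ (n : ℕ) : g^[n + 1] '' cthickening C (A^[n + 1] '' (A.symm '' L)) =
      g '' (g^[n] '' cthickening C (A^[n] '' L)) := by
    rw [Function.iterate_succ' g, image_comp, Function.iterate_succ (⇑A), image_comp,
      A.image_symm_image]
  apply subset_antisymm
  · refine (image_iInter_subset _ _).trans (iInter_mono fun n => ?_)
    rw [hg_iterate, hA_iterate]
    exact image_mono (hgA _)
  · calc ⋂ n : ℕ, g^[n] '' cthickening C (A^[n] '' (A.symm '' L))
        ⊆ ⋂ n : ℕ, g '' (g^[n] '' cthickening C (A^[n] '' L)) :=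
          subset_iInter fun n => (iInter_subset _ (n + 1)).trans_eq (h_succ n)
      _ = g '' ⋂ n : ℕ, g^[n] '' cthickening C (A^[n] '' L) := hg.injOn.image_iInter_eq.symm

end Leaves

/-- Equivariance of the generalized leaves:
`f⁻¹ '' η(L) = η(A⁻¹ '' L)` where
`η(L) = ⋂ n, (f⁻¹)^[n] '' (cthickening C ((A^[n]) '' L))`. -/
theorem stmt_4 {X : Type*} [PseudoMetricSpace X] (l C₀ : ℝ)
    (hl0 : 0 < l) (hl1 : l < 1) (hC₀ : 0 ≤ C₀)
    (A f : X ≃ X)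
    (hA : ∀ x y : X, dist (A.symm x) (A.symm y) ≤ l * dist x y)
    (hfA : ∀ x : X, dist (f.symm x) (A.symm x) ≤ C₀)
    (C : ℝ) (hC : C₀ / (1 - l) ≤ C) :
    ∀ L : Set X,
      ⇑f.symm '' (⋂ n : ℕ, (⇑f.symm)^[n] '' (cthickening C ((⇑A)^[n] '' L))) =
        ⋂ n : ℕ, (⇑f.symm)^[n] '' (cthickening C ((⇑A)^[n] '' (⇑A.symm '' L))) := by
  have h1l : 0 < 1 - l := sub_pos.2 hl1
  have hC_nonneg : 0 ≤ C := (div_nonneg hC₀ h1l.le).trans hC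
  have hCl : C₀ + l * C ≤ C := by
    rw [div_le_iff₀ h1l] at hC
    linarith
  have hfA' (x y : X) : dist (f.symm x) (A.symm y) ≤ C₀ + l * dist x y :=
    (dist_triangle _ (A.symm x) _).trans (add_le_add (hfA x) (hA x y))
  exact image_iInter_iterate_cthickening_eq f.symm.injective A
    (image_cthickening_subset_cthickening_image hl0 hfA' hC_nonneg hCl)
end

section
/- Let X be a pseudometric space, λ ∈ (0,1), C₀ ≥ 0 and C ≥ 0 with λ·(C + C₀) ≤ C. Let A : X ≃ X be a bijection with dist(A⁻¹(x), A⁻¹(y)) ≤ λ·dist(x, y) for all x, y ∈ X, and let f : X → X be a map with dist(f(z), A(z)) ≤ C₀ for all z ∈ X. Then for all x, y ∈ X and all n ∈ ℕ, if dist(A^[n+1](y), f^[n+1](x)) ≤ C then dist(A^[n](y), f^[n](x)) ≤ C. -/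
open Metric Set

/-- The nesting `E^{n+1}_x ⊆ E^n_x` of the sets
`E^n_x = {y | dist (A^[n] y) (f^[n] x) ≤ C}`. -/
theorem stmt_5 {X : Type*} [PseudoMetricSpace X] (l C₀ C : ℝ)
    (hl0 : 0 < l) (hl1 : l < 1) (hC₀ : 0 ≤ C₀) (hC : 0 ≤ C)
    (hCC : l * (C + C₀) ≤ C)
    (A : X ≃ X)
    (hA : ∀ x y : X, dist (A.symm x) (A.symm y) ≤ l * dist x y)
    (f : X → X)
    (hfA : ∀ z : X, dist (f z) (A z) ≤ C₀) :
    ∀ (x y : X) (n : ℕ),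
      dist ((⇑A)^[n + 1] y) (f^[n + 1] x) ≤ C →
        dist ((⇑A)^[n] y) (f^[n] x) ≤ C := by
  intro x y n h
  rw [Function.iterate_succ_apply'] at h
  have key : dist ((⇑A)^[n] y) (f^[n] x)
      = dist (A.symm (A ((⇑A)^[n] y))) (A.symm (A (f^[n] x))) := by
    simp
  rw [key]
  calc dist (A.symm (A ((⇑A)^[n] y))) (A.symm (A (f^[n] x)))
      ≤ l * dist (A ((⇑A)^[n] y)) (A (f^[n] x)) := hA _ _
    _ ≤ l * (dist (A ((⇑A)^[n] y)) (f^[n+1] x) + dist (f^[n+1] x) (A (f^[n] x))) := by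
        have := dist_triangle (A ((⇑A)^[n] y)) (f^[n+1] x) (A (f^[n] x))
        nlinarith
    _ ≤ l * (C + C₀) := by
        have h2 : dist (f^[n+1] x) (A (f^[n] x)) ≤ C₀ := by
          rw [Function.iterate_succ_apply']; exact hfA _
        nlinarith
    _ ≤ C := hCC
end

section
/- Let X be a pseudometric space, λ ∈ (0,1) and C ≥ 0. Let A : X ≃ X and f : X ≃ X be bijections with dist(A⁻¹(x), A⁻¹(y)) ≤ λ·dist(x, y) for all x, y ∈ X. Let L, L' ⊆ X be subsets and suppose there is δ > 0 such that dist(z, z') ≥ δ for every z ∈ L and z' ∈ L'. Then there exists N ∈ ℕ such that the closed C-thickenings of (A^[N]) '' L and of (A^[N]) '' L' are disjoint; consequently the sets ⋂_{n≥0} (f⁻¹)^[n] '' (cthickening C ((A^[n]) '' L)) and ⋂_{n≥0} (f⁻¹)^[n] '' (cthickening C ((A^[n]) '' L')) are disjoint. -/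
open Metric Set

lemma expand_iter {X : Type*} [PseudoMetricSpace X] (l : ℝ) (hl : 0 ≤ l) (A : X ≃ X)
    (hA : ∀ x y : X, dist (A.symm x) (A.symm y) ≤ l * dist x y) :
    ∀ (n : ℕ) (x y : X), dist x y ≤ l ^ n * dist ((⇑A)^[n] x) ((⇑A)^[n] y) := by
  intro n
  induction n with
  | zero => intro x y; simp
  | succ n ih =>
    intro x y
    have h1 : dist ((⇑A)^[n] x) ((⇑A)^[n] y)
        ≤ l * dist ((⇑A)^[n+1] x) ((⇑A)^[n+1] y) := by
      have := hA ((⇑A)^[n+1] x) ((⇑A)^[n+1] y)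
      simpa [Function.iterate_succ_apply'] using this
    calc dist x y ≤ l ^ n * dist ((⇑A)^[n] x) ((⇑A)^[n] y) := ih x y
      _ ≤ l ^ n * (l * dist ((⇑A)^[n+1] x) ((⇑A)^[n+1] y)) :=
          mul_le_mul_of_nonneg_left h1 (pow_nonneg hl n)
      _ = l ^ (n+1) * dist ((⇑A)^[n+1] x) ((⇑A)^[n+1] y) := by ring

lemma infDist_le_of_mem_cthickening' {X : Type*} [PseudoMetricSpace X]
    {C : ℝ} (hC : 0 ≤ C) {S : Set X} {x : X} (hx : x ∈ cthickening C S) :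
    infDist x S ≤ C := by
  rw [Metric.mem_cthickening_iff] at hx
  have h := ENNReal.toReal_mono (by simp) hx
  rw [ENNReal.toReal_ofReal hC] at h
  simpa [Metric.infDist] using h

/-- If the sets `L` and `L'` are at distance at least `δ > 0` from each other, then
some iterate of `A` pushes them so far apart that their closed `C`-thickenings are
disjoint; consequently the associated generalized leaves are disjoint. -/
theorem stmt_7 {X : Type*} [PseudoMetricSpace X] (l C : ℝ)
    (hl0 : 0 < l) (hl1 : l < 1) (hC : 0 ≤ C)
    (A f : X ≃ X)
    (hA : ∀ x y : X, dist (A.symm x) (A.symm y) ≤ l * dist x y)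
    (L L' : Set X) (δ : ℝ) (hδ : 0 < δ)
    (hsep : ∀ z ∈ L, ∀ z' ∈ L', δ ≤ dist z z') :
    (∃ N : ℕ, Disjoint (cthickening C ((⇑A)^[N] '' L))
        (cthickening C ((⇑A)^[N] '' L'))) ∧
      Disjoint (⋂ n : ℕ, (⇑f.symm)^[n] '' (cthickening C ((⇑A)^[n] '' L)))
        (⋂ n : ℕ, (⇑f.symm)^[n] '' (cthickening C ((⇑A)^[n] '' L'))) := by
  -- choose N with l^N * (2C+1) < δ
  obtain ⟨N, hN⟩ : ∃ N : ℕ, l ^ N < δ / (2 * C + 1) := by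
    exact exists_pow_lt_of_lt_one
      (show (0:ℝ) < δ / (2 * C + 1) from div_pos hδ (by linarith)) hl1
  have hlN : l ^ N * (2 * C + 1) < δ := by
    rw [← lt_div_iff₀ (by linarith)]
    exact hN
  have hdisj : ∀ n : ℕ, l ^ n * (2 * C + 1) < δ →
      Disjoint (cthickening C ((⇑A)^[n] '' L)) (cthickening C ((⇑A)^[n] '' L')) := by
    intro n hn
    rw [Set.disjoint_left]
    intro x hx hx'
    rcases L.eq_empty_or_nonempty with rfl | hLne
    · simp [cthickening_empty] at hx
    rcases L'.eq_empty_or_nonempty with rfl | hL'ne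
    · simp [cthickening_empty] at hx'
    have h1 : infDist x ((⇑A)^[n] '' L) ≤ C := by
      exact infDist_le_of_mem_cthickening' hC hx
    have h2 : infDist x ((⇑A)^[n] '' L') ≤ C := by
      exact infDist_le_of_mem_cthickening' hC hx'
    obtain ⟨a, ha, hda⟩ := (infDist_lt_iff (hLne.image _)).mp
      (lt_of_le_of_lt h1 (by linarith : C < C + 1/2))
    obtain ⟨b, hb, hdb⟩ := (infDist_lt_iff (hL'ne.image _)).mp
      (lt_of_le_of_lt h2 (by linarith : C < C + 1/2))
    obtain ⟨z, hz, rfl⟩ := ha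
    obtain ⟨z', hz', rfl⟩ := hb
    have hab : dist ((⇑A)^[n] z) ((⇑A)^[n] z') < 2 * C + 1 := by
      calc dist ((⇑A)^[n] z) ((⇑A)^[n] z')
          ≤ dist x ((⇑A)^[n] z) + dist x ((⇑A)^[n] z') := dist_triangle_left _ _ _
        _ < 2 * C + 1 := by linarith
    have := expand_iter l hl0.le A hA n z z'
    have hδle : δ ≤ l ^ n * dist ((⇑A)^[n] z) ((⇑A)^[n] z') :=
      le_trans (hsep z hz z' hz') this
    have : l ^ n * dist ((⇑A)^[n] z) ((⇑A)^[n] z') < l ^ n * (2 * C + 1) :=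
      mul_lt_mul_of_pos_left hab (pow_pos hl0 n)
    linarith
  refine ⟨⟨N, hdisj N hlN⟩, ?_⟩
  rw [Set.disjoint_left]
  intro x hx hx'
  have h1 := Set.mem_iInter.mp hx N
  have h2 := Set.mem_iInter.mp hx' N
  obtain ⟨a, ha, hax⟩ := h1
  obtain ⟨b, hb, hbx⟩ := h2
  have hab : a = b := (Function.Injective.iterate f.symm.injective N) (hax.trans hbx.symm)
  exact Set.disjoint_left.mp (hdisj N hlN) ha (hab ▸ hb)
end

section
/- Let X be a pseudometric space, λ ∈ (0,1) and C ≥ 0. Let A : X ≃ X be a bijection with dist(A⁻¹(x), A⁻¹(y)) ≤ λ·dist(x, y) for all x, y ∈ X, and let f : X → X be any map. Suppose x, y, z, z' ∈ X satisfy dist(f^[n](x), A^[n](z)) ≤ C and dist(f^[n](y), A^[n](z')) ≤ C for all n ≥ 0. Then for every n ≥ 0, dist(f^[n](x), f^[n](y)) ≥ λ^{-n}·dist(z, z') − 2C. In particular, if dist(z, z') > 0, then the sequence n ↦ dist(f^[n](x), f^[n](y)) is unbounded. -/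
open Metric Set

/-- If the `f`-orbits of `x` and `y` shadow the `A`-orbits of `z` and `z'` within
distance `C`, then `dist (f^[n] x) (f^[n] y) ≥ l⁻¹ ^ n * dist z z' - 2 * C`; in
particular, if `dist z z' > 0`, the sequence `n ↦ dist (f^[n] x) (f^[n] y)` is
unbounded. -/
theorem stmt_8 {X : Type*} [PseudoMetricSpace X] (l C : ℝ)
    (hl0 : 0 < l) (hl1 : l < 1) (hC : 0 ≤ C)
    (A : X ≃ X)
    (hA : ∀ x y : X, dist (A.symm x) (A.symm y) ≤ l * dist x y)
    (f : X → X) (x y z z' : X)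
    (hx : ∀ n : ℕ, dist (f^[n] x) ((⇑A)^[n] z) ≤ C)
    (hy : ∀ n : ℕ, dist (f^[n] y) ((⇑A)^[n] z') ≤ C) :
    (∀ n : ℕ, l⁻¹ ^ n * dist z z' - 2 * C ≤ dist (f^[n] x) (f^[n] y)) ∧
      (0 < dist z z' → ∀ M : ℝ, ∃ n : ℕ, M < dist (f^[n] x) (f^[n] y)) := by
  have hiter : ∀ n : ℕ, ∀ a b : X,
      dist ((⇑A.symm)^[n] a) ((⇑A.symm)^[n] b) ≤ l ^ n * dist a b := by
    intro n
    induction n with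
    | zero => intro a b; simp
    | succ n ih =>
      intro a b
      rw [Function.iterate_succ_apply', Function.iterate_succ_apply']
      calc dist (A.symm ((⇑A.symm)^[n] a)) (A.symm ((⇑A.symm)^[n] b))
          ≤ l * dist ((⇑A.symm)^[n] a) ((⇑A.symm)^[n] b) := hA _ _
        _ ≤ l * (l ^ n * dist a b) := by
            exact mul_le_mul_of_nonneg_left (ih a b) hl0.le
        _ = l ^ (n + 1) * dist a b := by ring
  have hsymm : ∀ n : ℕ, ∀ a : X, (⇑A.symm)^[n] ((⇑A)^[n] a) = a := by
    intro n
    induction n with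
    | zero => intro a; simp
    | succ n ih =>
      intro a
      rw [Function.iterate_succ_apply', Function.iterate_succ_apply, ih (A a),
        Equiv.symm_apply_apply]
  have key : ∀ n : ℕ, l⁻¹ ^ n * dist z z' ≤ dist ((⇑A)^[n] z) ((⇑A)^[n] z') := by
    intro n
    have h := hiter n ((⇑A)^[n] z) ((⇑A)^[n] z')
    rw [hsymm n z, hsymm n z'] at h
    rw [inv_pow]
    rw [inv_mul_le_iff₀ (pow_pos hl0 n)] at *
    linarith [h]
  have main : ∀ n : ℕ, l⁻¹ ^ n * dist z z' - 2 * C ≤ dist (f^[n] x) (f^[n] y) := by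
    intro n
    have h1 := hx n
    have h2 := hy n
    have h3 : dist ((⇑A)^[n] z) ((⇑A)^[n] z') ≤
        dist ((⇑A)^[n] z) (f^[n] x) + dist (f^[n] x) (f^[n] y) + dist (f^[n] y) ((⇑A)^[n] z') :=
      dist_triangle4 _ _ _ _
    rw [dist_comm ((⇑A)^[n] z) (f^[n] x)] at h3
    linarith [key n]
  refine ⟨main, fun hd M => ?_⟩
  obtain ⟨n, hn⟩ := pow_unbounded_of_one_lt ((M + 2 * C) / dist z z')
    ((one_lt_inv₀ hl0).mpr hl1)
  refine ⟨n, ?_⟩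
  have : M + 2 * C < l⁻¹ ^ n * dist z z' := by
    rw [div_lt_iff₀ hd] at hn; linarith
  linarith [main n]
end

section
/- Let X be a pseudometric space, λ ∈ (0,1), and let A : X ≃ X be a bijection with dist(A(x), A(y)) ≤ λ^{-1}·dist(x, y) for all x, y ∈ X. Let 0 ≤ C' < C be reals, let N ∈ ℕ, and let η be a real with 0 ≤ η ≤ λ^N·(C − C'). Then for all subsets L, L' ⊆ X with L' ⊆ cthickening η L and for every n ≤ N, one has cthickening C' ((A^[n]) '' L') ⊆ cthickening C ((A^[n]) '' L). -/
/-!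
`A^[n]` is `l⁻¹ ^ n`-Lipschitz, so it maps the `η`-neighbourhood of `L` into the
`l⁻¹ ^ n * η`-neighbourhood of `A^[n] '' L`; for `n ≤ N` this radius is at most `C - C'`,
and a `C'`-neighbourhood of a `(C - C')`-neighbourhood lies in the `C`-neighbourhood.
-/

open Metric Set

open scoped NNReal ENNReal

namespace LipschitzWith

variable {α β : Type*} [PseudoEMetricSpace α] [PseudoEMetricSpace β] {K : ℝ≥0} {f : α → β}

theorem infEDist_image_le (hf : LipschitzWith K f) (x : α) {s : Set α} (hs : s.Nonempty) :
    infEDist (f x) (f '' s) ≤ K * infEDist x s := by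
  have : Nonempty s := hs.to_subtype
  rw [infEDist, iInf_image, infEDist, iInf_subtype', iInf_subtype',
    ENNReal.mul_iInf fun hK => absurd hK ENNReal.coe_ne_top]
  exact iInf_mono fun y => hf x y

theorem image_cthickening_subset (hf : LipschitzWith K f) (δ : ℝ) (s : Set α) :
    f '' cthickening δ s ⊆ cthickening (K * δ) (f '' s) := by
  rintro _ ⟨x, hx, rfl⟩
  rcases s.eq_empty_or_nonempty with rfl | hs
  · simp at hx
  rw [mem_cthickening_iff] at hx ⊢
  rw [ENNReal.ofReal_mul K.coe_nonneg, ENNReal.ofReal_coe_nnreal]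
  exact (hf.infEDist_image_le x hs).trans (by gcongr)

theorem cthickening_image_subset_of_subset_cthickening (hf : LipschitzWith K f) {s t : Set α}
    {δ C' C : ℝ} (hδ : 0 ≤ δ) (hC' : 0 ≤ C') (hC : C' + K * δ ≤ C)
    (hts : t ⊆ cthickening δ s) :
    cthickening C' (f '' t) ⊆ cthickening C (f '' s) :=
  calc cthickening C' (f '' t)
      ⊆ cthickening C' (cthickening (K * δ) (f '' s)) :=
        cthickening_subset_of_subset _ ((image_mono hts).trans (hf.image_cthickening_subset δ s))
    _ ⊆ cthickening (C' + K * δ) (f '' s) :=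
        cthickening_cthickening_subset hC' (by positivity) _
    _ ⊆ cthickening C (f '' s) := cthickening_mono hC _

end LipschitzWith

theorem inv_pow_mul_pow_le_one {l : ℝ} (hl0 : 0 < l) (hl1 : l < 1) {n N : ℕ} (hn : n ≤ N) :
    l⁻¹ ^ n * l ^ N ≤ 1 := by
  rw [inv_pow, mul_comm, ← pow_sub₀ l hl0.ne' hn]
  exact pow_le_one₀ hl0.le hl1.le

/-- If `A` expands distances by at most `l⁻¹`, `C' < C` and `L'` lies in the
`η`-neighbourhood of `L` with `η ≤ l ^ N * (C - C')`, then for all `n ≤ N` the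
`C'`-thickening of `A^[n] '' L'` is contained in the `C`-thickening of
`A^[n] '' L`. -/
theorem stmt_12 {X : Type*} [PseudoMetricSpace X] (l : ℝ)
    (hl0 : 0 < l) (hl1 : l < 1)
    (A : X ≃ X)
    (hA : ∀ x y : X, dist (A x) (A y) ≤ l⁻¹ * dist x y)
    (C' C : ℝ) (hC' : 0 ≤ C') (hC'C : C' < C)
    (N : ℕ) (η : ℝ) (hη0 : 0 ≤ η) (hηN : η ≤ l ^ N * (C - C')) :
    ∀ L L' : Set X, L' ⊆ cthickening η L →
      ∀ n : ℕ, n ≤ N →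
        cthickening C' ((⇑A)^[n] '' L') ⊆ cthickening C ((⇑A)^[n] '' L) := by
  intro L L' hL'L n hn
  let K : ℝ≥0 := ⟨l⁻¹, inv_nonneg.2 hl0.le⟩
  have hAK : LipschitzWith K A := LipschitzWith.of_dist_le_mul hA
  refine (hAK.iterate n).cthickening_image_subset_of_subset_cthickening hη0 hC' ?_ hL'L
  have hCC' : 0 ≤ C - C' := sub_nonneg.2 hC'C.le
  calc C' + ((K ^ n : ℝ≥0) : ℝ) * η = C' + l⁻¹ ^ n * η := by rw [NNReal.coe_pow]; rfl
    _ ≤ C' + l⁻¹ ^ n * l ^ N * (C - C') := by rw [mul_assoc]; gcongr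
    _ ≤ C' + 1 * (C - C') := by
        gcongr; exact inv_pow_mul_pow_le_one hl0 hl1 hn
    _ = C := by ring
end
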